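/- Weak noninfluence is equivalent to the conjunction of weak_noninterference_r and nonleakage: weak_noninfluence = (weak_noninterference_r ∧ nonleakage). -/
import Mathlib


open scoped Classical

universe u v w

variable {S : Type u} {E : Type v} {D : Type w}

def run (φ : E → Set (S × S)) : List E → Set (S × S)
  | [] => {p | p.2 = p.1}
  | e :: es => {p | ∃ m, (p.1, m) ∈ φ e ∧ (m, p.2) ∈ run φ es}

def execution (φ : E → Set (S × S)) (s : S) (es : List E) : Set S :=
  {t | (s, t) ∈ run φ es}

def reachable (φ : E → Set (S × S)) (s0 : S) (s : S) : Prop :=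
  ∃ es, (s0, s) ∈ run φ es

def sources (φ : E → Set (S × S)) (kdom : S → E → D) (intf : D → D → Prop) :
    List E → S → D → Set D
  | [], _, d => {d}
  | e :: es, s, d =>
      {w | ∃ s', (s, s') ∈ φ e ∧ w ∈ sources φ kdom intf es s' d} ∪
      {w | w = kdom s e ∧
        ∃ v s', intf w v ∧ (s, s') ∈ φ e ∧ v ∈ sources φ kdom intf es s' d}

noncomputable def ipurge (φ : E → Set (S × S)) (kdom : S → E → D)
    (intf : D → D → Prop) : List E → D → Set S → List E
  | [], _, _ => []
  | e :: es, d, ss =>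
      if ∃ s ∈ ss, kdom s e ∈ sources φ kdom intf (e :: es) s d then
        e :: ipurge φ kdom intf es d {s' | ∃ s ∈ ss, (s, s') ∈ φ e}
      else ipurge φ kdom intf es d ss

/-- observational equivalence: (s ⊳ es1) ≃d≃ (t ⊳ es2) -/
def obseq (φ : E → Set (S × S)) (vpeq : S → D → S → Prop)
    (s : S) (es1 : List E) (d : D) (t : S) (es2 : List E) : Prop :=
  ∀ s' ∈ execution φ s es1, ∀ t' ∈ execution φ t es2, vpeq s' d t'

/-- step consistent condition of event, with separate hypothesis/conclusion
equivalence relations (used for the Δ-restricted variants). -/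
def SCe2 (φ : E → Set (S × S)) (kdom : S → E → D) (intf : D → D → Prop)
    (vpeqH vpeqCon : S → D → S → Prop) (sched : D) (s0 : S) (e : E) : Prop :=
  ∀ d s t, reachable φ s0 s → reachable φ s0 t → vpeqH s d t → vpeqH s sched t →
    intf (kdom s e) d → vpeqH s (kdom s e) t →
    ∀ s' t', (s, s') ∈ φ e → (t, t') ∈ φ e → vpeqCon s' d t'

/-- locally respects condition of event. -/
def LRe2 (φ : E → Set (S × S)) (kdom : S → E → D) (intf : D → D → Prop)
    (vpeqCon : S → D → S → Prop) (s0 : S) (e : E) : Prop :=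
  ∀ d s s', reachable φ s0 s → ¬ intf (kdom s e) d → (s, s') ∈ φ e →
    vpeqCon s d s'

def SCe (φ : E → Set (S × S)) (kdom : S → E → D) (intf : D → D → Prop)
    (vpeq : S → D → S → Prop) (sched : D) (s0 : S) (e : E) : Prop :=
  SCe2 φ kdom intf vpeq vpeq sched s0 e

def LRe (φ : E → Set (S × S)) (kdom : S → E → D) (intf : D → D → Prop)
    (vpeq : S → D → S → Prop) (s0 : S) (e : E) : Prop :=
  LRe2 φ kdom intf vpeq s0 e

def noninfluence (φ : E → Set (S × S)) (kdom : S → E → D) (intf : D → D → Prop)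
    (vpeq : S → D → S → Prop) (sched : D) (s0 : S) : Prop :=
  ∀ d es s t, reachable φ s0 s → reachable φ s0 t → vpeq s sched t →
    (∀ u ∈ sources φ kdom intf es s d, vpeq s u t) →
    obseq φ vpeq s es d t (ipurge φ kdom intf es d {t})

def weak_noninfluence (φ : E → Set (S × S)) (kdom : S → E → D)
    (intf : D → D → Prop) (vpeq : S → D → S → Prop) (sched : D) (s0 : S) : Prop :=
  ∀ d es1 es2 s t, reachable φ s0 s → reachable φ s0 t →
    (∀ u ∈ sources φ kdom intf es1 s d, vpeq s u t) → vpeq s sched t →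
    ipurge φ kdom intf es1 d {s} = ipurge φ kdom intf es2 d {t} →
    obseq φ vpeq s es1 d t es2

def nonleakage (φ : E → Set (S × S)) (kdom : S → E → D) (intf : D → D → Prop)
    (vpeq : S → D → S → Prop) (sched : D) (s0 : S) : Prop :=
  ∀ d es s t, reachable φ s0 s → reachable φ s0 t → vpeq s sched t →
    (∀ u ∈ sources φ kdom intf es s d, vpeq s u t) →
    obseq φ vpeq s es d t es

def noninterference_r (φ : E → Set (S × S)) (kdom : S → E → D)
    (intf : D → D → Prop) (vpeq : S → D → S → Prop) (s0 : S) : Prop :=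
  ∀ d es s, reachable φ s0 s →
    obseq φ vpeq s es d s (ipurge φ kdom intf es d {s})

def noninterference (φ : E → Set (S × S)) (kdom : S → E → D)
    (intf : D → D → Prop) (vpeq : S → D → S → Prop) (s0 : S) : Prop :=
  ∀ d es, obseq φ vpeq s0 es d s0 (ipurge φ kdom intf es d {s0})

def weak_noninterference_r (φ : E → Set (S × S)) (kdom : S → E → D)
    (intf : D → D → Prop) (vpeq : S → D → S → Prop) (s0 : S) : Prop :=
  ∀ d es1 es2 s, reachable φ s0 s →
    ipurge φ kdom intf es1 d {s} = ipurge φ kdom intf es2 d {s} →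
    obseq φ vpeq s es1 d s es2

def weak_noninterference (φ : E → Set (S × S)) (kdom : S → E → D)
    (intf : D → D → Prop) (vpeq : S → D → S → Prop) (s0 : S) : Prop :=
  ∀ d es1 es2,
    ipurge φ kdom intf es1 d {s0} = ipurge φ kdom intf es2 d {s0} →
    obseq φ vpeq s0 es1 d s0 es2

section WNIAux

variable {φ : E → Set (S × S)} {kdom : S → E → D} {intf : D → D → Prop}
  {vpeq : S → D → S → Prop} {sched : D} {s0 : S}

/-- sched-equivalence is preserved by simultaneous steps. -/
def SStep (φ : E → Set (S × S)) (vpeq : S → D → S → Prop) (sched : D) (s0 : S) : Prop :=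
  ∀ (e : E) (s t s' t' : S), reachable φ s0 s → reachable φ s0 t → vpeq s sched t →
    (s, s') ∈ φ e → (t, t') ∈ φ e → vpeq s' sched t'

lemma run_step {s s' : S} {e : E} {es : List E} (h1 : (s0, s) ∈ run φ es)
    (h2 : (s, s') ∈ φ e) : (s0, s') ∈ run φ (es ++ [e]) := by
  induction es generalizing s0 with
  | nil =>
      have h : s = s0 := h1
      subst h
      exact ⟨s', h2, rfl⟩
  | cons e' es ih =>
      obtain ⟨m, hm, hrest⟩ := h1
      exact ⟨m, hm, ih hrest⟩

lemma reachable_step {s s' : S} {e : E} (hs : reachable φ s0 s)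
    (h : (s, s') ∈ φ e) : reachable φ s0 s' := by
  obtain ⟨es, hes⟩ := hs
  exact ⟨es ++ [e], run_step hes h⟩

lemma run_nonempty (henabled : ∀ s e, reachable φ s0 s → ∃ s', (s, s') ∈ φ e)
    (es : List E) : ∀ s, reachable φ s0 s → ∃ t, (s, t) ∈ run φ es := by
  induction es with
  | nil => intro s _; exact ⟨s, rfl⟩
  | cons e es ih =>
      intro s hs
      obtain ⟨s', hs'⟩ := henabled s e hs
      obtain ⟨t, ht⟩ := ih s' (reachable_step hs hs')
      exact ⟨t, s', hs', ht⟩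

lemma sources_sched (hsched' : ∀ d, intf d sched → d = sched)
    (es : List E) : ∀ s, reachable φ s0 s →
    sources φ kdom intf es s sched ⊆ {sched} := by
  induction es with
  | nil => intro s _ w hw; exact hw
  | cons e es ih =>
      intro s hs w hw
      simp only [sources, Set.mem_union, Set.mem_setOf_eq] at hw
      rcases hw with ⟨s', hss', hw⟩ | ⟨hwe, v, s', hintf, hss', hv⟩
      · exact ih s' (reachable_step hs hss') hw
      · have hv' : v = sched := ih s' (reachable_step hs hss') hv
        subst hv'
        exact hsched' w hintf

lemma d_mem_sources (henabled : ∀ s e, reachable φ s0 s → ∃ s', (s, s') ∈ φ e)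
    (es : List E) : ∀ s d, reachable φ s0 s → d ∈ sources φ kdom intf es s d := by
  induction es with
  | nil => intro s d _; rfl
  | cons e es ih =>
      intro s d hs
      obtain ⟨s', hs'⟩ := henabled s e hs
      exact Or.inl ⟨s', hs', ih s' d (reachable_step hs hs')⟩

lemma sources_subset
    (henabled : ∀ s e, reachable φ s0 s → ∃ s', (s, s') ∈ φ e)
    (hkdom : ∀ s t e, vpeq s sched t → kdom s e = kdom t e)
    (hP : SStep φ vpeq sched s0)
    (es : List E) : ∀ s t d, reachable φ s0 s → reachable φ s0 t → vpeq s sched t →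
      sources φ kdom intf es s d ⊆ sources φ kdom intf es t d := by
  induction es with
  | nil => intro s t d _ _ _ w hw; exact hw
  | cons e es ih =>
      intro s t d hs ht hst w hw
      simp only [sources, Set.mem_union, Set.mem_setOf_eq] at hw ⊢
      obtain ⟨t', htt'⟩ := henabled t e ht
      rcases hw with ⟨s', hss', hw⟩ | ⟨hwe, v, s', hintf, hss', hv⟩
      · exact Or.inl ⟨t', htt',
          ih s' t' d (reachable_step hs hss') (reachable_step ht htt')
            (hP e s t s' t' hs ht hst hss' htt') hw⟩
      · exact Or.inr ⟨hwe.trans (hkdom s t e hst), v, t', hintf, htt',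
          ih s' t' d (reachable_step hs hss') (reachable_step ht htt')
            (hP e s t s' t' hs ht hst hss' htt') hv⟩

lemma sources_eq
    (hequiv : ∀ d, Equivalence (fun s t => vpeq s d t))
    (henabled : ∀ s e, reachable φ s0 s → ∃ s', (s, s') ∈ φ e)
    (hkdom : ∀ s t e, vpeq s sched t → kdom s e = kdom t e)
    (hP : SStep φ vpeq sched s0)
    (es : List E) (s t : S) (d : D) (hs : reachable φ s0 s) (ht : reachable φ s0 t)
    (hst : vpeq s sched t) :
    sources φ kdom intf es s d = sources φ kdom intf es t d :=
  Set.Subset.antisymm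
    (sources_subset henabled hkdom hP es s t d hs ht hst)
    (sources_subset henabled hkdom hP es t s d ht hs ((hequiv sched).symm hst))

lemma ipurge_eq
    (hequiv : ∀ d, Equivalence (fun s t => vpeq s d t))
    (henabled : ∀ s e, reachable φ s0 s → ∃ s', (s, s') ∈ φ e)
    (hkdom : ∀ s t e, vpeq s sched t → kdom s e = kdom t e)
    (hP : SStep φ vpeq sched s0)
    (es : List E) : ∀ (d : D) (ss tt : Set S), ss.Nonempty → tt.Nonempty →
      (∀ s ∈ ss, reachable φ s0 s) → (∀ t ∈ tt, reachable φ s0 t) →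
      (∀ s ∈ ss, ∀ t ∈ tt, vpeq s sched t) →
      ipurge φ kdom intf es d ss = ipurge φ kdom intf es d tt := by
  induction es with
  | nil => intro d ss tt _ _ _ _ _; rfl
  | cons e es ih =>
      intro d ss tt hne1 hne2 hr1 hr2 hvp
      have hcond : (∃ s ∈ ss, kdom s e ∈ sources φ kdom intf (e :: es) s d) ↔
          (∃ t ∈ tt, kdom t e ∈ sources φ kdom intf (e :: es) t d) := by
        constructor
        · rintro ⟨s, hsmem, hmem⟩
          obtain ⟨t, htmem⟩ := hne2
          refine ⟨t, htmem, ?_⟩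
          rw [← hkdom s t e (hvp s hsmem t htmem),
            ← sources_eq hequiv henabled hkdom hP (e :: es) s t d (hr1 s hsmem)
              (hr2 t htmem) (hvp s hsmem t htmem)]
          exact hmem
        · rintro ⟨t, htmem, hmem⟩
          obtain ⟨s, hsmem⟩ := hne1
          refine ⟨s, hsmem, ?_⟩
          rw [hkdom s t e (hvp s hsmem t htmem),
            sources_eq hequiv henabled hkdom hP (e :: es) s t d (hr1 s hsmem)
              (hr2 t htmem) (hvp s hsmem t htmem)]
          exact hmem
      simp only [ipurge]
      by_cases h : ∃ s ∈ ss, kdom s e ∈ sources φ kdom intf (e :: es) s d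
      · rw [if_pos h, if_pos (hcond.mp h)]
        congr 1
        apply ih
        · obtain ⟨s, hsmem⟩ := hne1
          obtain ⟨s', hs'⟩ := henabled s e (hr1 s hsmem)
          exact ⟨s', s, hsmem, hs'⟩
        · obtain ⟨t, htmem⟩ := hne2
          obtain ⟨t', ht'⟩ := henabled t e (hr2 t htmem)
          exact ⟨t', t, htmem, ht'⟩
        · rintro s' ⟨s, hsmem, hss'⟩
          exact reachable_step (hr1 s hsmem) hss'
        · rintro t' ⟨t, htmem, htt'⟩
          exact reachable_step (hr2 t htmem) htt'
        · rintro s' ⟨s, hsmem, hss'⟩ t' ⟨t, htmem, htt'⟩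
          exact hP e s t s' t' (hr1 s hsmem) (hr2 t htmem) (hvp s hsmem t htmem)
            hss' htt'
      · rw [if_neg h, if_neg (fun h' => h (hcond.mpr h'))]
        exact ih d ss tt hne1 hne2 hr1 hr2 hvp

/-- From weak_noninfluence we can recover the sched-step property. -/
lemma wni_to_sstep
    (hequiv : ∀ d, Equivalence (fun s t => vpeq s d t))
    (hkdom : ∀ s t e, vpeq s sched t → kdom s e = kdom t e)
    (henabled : ∀ s e, reachable φ s0 s → ∃ s', (s, s') ∈ φ e)
    (hsched' : ∀ d, intf d sched → d = sched)
    (h : weak_noninfluence φ kdom intf vpeq sched s0) :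
    SStep φ vpeq sched s0 := by
  intro e s t s' t' hs ht hst hss' htt'
  have hsrcS := sources_sched (s0 := s0) (φ := φ) (kdom := kdom) hsched' [e] s hs
  have hsrcT := sources_sched (s0 := s0) (φ := φ) (kdom := kdom) hsched' [e] t ht
  have hcondS : (∃ x ∈ ({s} : Set S), kdom x e ∈ sources φ kdom intf [e] x sched)
      ↔ kdom s e = sched := by
    constructor
    · rintro ⟨x, hx, hmem⟩
      have hx' : x = s := hx
      subst hx'
      exact hsrcS hmem
    · intro hk
      exact ⟨s, rfl, Or.inl ⟨s', hss', by simp [sources, hk]⟩⟩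
  have hcondT : (∃ x ∈ ({t} : Set S), kdom x e ∈ sources φ kdom intf [e] x sched)
      ↔ kdom t e = sched := by
    constructor
    · rintro ⟨x, hx, hmem⟩
      have hx' : x = t := hx
      subst hx'
      exact hsrcT hmem
    · intro hk
      exact ⟨t, rfl, Or.inl ⟨t', htt', by simp [sources, hk]⟩⟩
  have hkeq : kdom s e = kdom t e := hkdom s t e hst
  have hipeq : ipurge φ kdom intf [e] sched {s} = ipurge φ kdom intf [e] sched {t} := by
    simp only [ipurge]
    by_cases hk : kdom s e = sched
    · rw [if_pos (hcondS.mpr hk), if_pos (hcondT.mpr (hkeq ▸ hk))]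
    · rw [if_neg (fun h' => hk (hcondS.mp h')),
        if_neg (fun h' => hk (hkeq ▸ hcondT.mp h'))]
  have hob := h sched [e] [e] s t hs ht
    (fun u hu => by
      have : u = sched := hsrcS hu
      subst this; exact hst) hst hipeq
  exact hob s' ⟨s', hss', rfl⟩ t' ⟨t', htt', rfl⟩

/-- From nonleakage we can recover the sched-step property. -/
lemma nl_to_sstep
    (hsched' : ∀ d, intf d sched → d = sched)
    (h : nonleakage φ kdom intf vpeq sched s0) :
    SStep φ vpeq sched s0 := by
  intro e s t s' t' hs ht hst hss' htt'
  have hsrcS := sources_sched (s0 := s0) (φ := φ) (kdom := kdom) hsched' [e] s hs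
  have hob := h sched [e] s t hs ht hst
    (fun u hu => by
      have : u = sched := hsrcS hu
      subst this; exact hst)
  exact hob s' ⟨s', hss', rfl⟩ t' ⟨t', htt', rfl⟩

end WNIAux

/-- weak_noninfluence = (weak_noninterference_r ∧ nonleakage). -/
theorem weak_noninfluence_iff
    (φ : E → Set (S × S)) (kdom : S → E → D) (intf : D → D → Prop)
    (vpeq : S → D → S → Prop) (sched : D) (s0 : S)
    (hequiv : ∀ d, Equivalence (fun s t => vpeq s d t))
    (hkdom : ∀ s t e, vpeq s sched t → kdom s e = kdom t e)
    (henabled : ∀ s e, reachable φ s0 s → ∃ s', (s, s') ∈ φ e)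
    (hsched : ∀ d, intf sched d)
    (hsched' : ∀ d, intf d sched → d = sched) :
    weak_noninfluence φ kdom intf vpeq sched s0 ↔
      (weak_noninterference_r φ kdom intf vpeq s0 ∧
       nonleakage φ kdom intf vpeq sched s0) := by
  constructor
  · intro h
    constructor
    · intro d es1 es2 s hs heq
      exact h d es1 es2 s s hs hs (fun u _ => (hequiv u).refl s)
        ((hequiv sched).refl s) heq
    · intro d es s t hs ht hst hsrc
      have hP := wni_to_sstep hequiv hkdom henabled hsched' h
      have hipeq : ipurge φ kdom intf es d {s} = ipurge φ kdom intf es d {t} :=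
        ipurge_eq hequiv henabled hkdom hP es d {s} {t} ⟨s, rfl⟩ ⟨t, rfl⟩
          (fun x hx => by rw [Set.mem_singleton_iff] at hx; subst hx; exact hs)
          (fun x hx => by rw [Set.mem_singleton_iff] at hx; subst hx; exact ht)
          (fun x hx y hy => by
            rw [Set.mem_singleton_iff] at hx hy; subst hx; subst hy; exact hst)
      exact h d es es s t hs ht hsrc hst hipeq
  · rintro ⟨h1, h2⟩ d es1 es2 s t hs ht hsrc hst heq
    have hP := nl_to_sstep hsched' h2
    have hipeq : ipurge φ kdom intf es1 d {t} = ipurge φ kdom intf es1 d {s} :=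
      ipurge_eq hequiv henabled hkdom hP es1 d {t} {s} ⟨t, rfl⟩ ⟨s, rfl⟩
        (fun x hx => by rw [Set.mem_singleton_iff] at hx; subst hx; exact ht)
        (fun x hx => by rw [Set.mem_singleton_iff] at hx; subst hx; exact hs)
        (fun x hx y hy => by
          rw [Set.mem_singleton_iff] at hx hy; subst hx; subst hy
          exact (hequiv sched).symm hst)
    have hA : obseq φ vpeq s es1 d t es1 := h2 d es1 s t hs ht hst hsrc
    have hB : obseq φ vpeq t es1 d t es2 :=
      h1 d es1 es2 t ht (hipeq.trans heq)
    intro s' hs' t' ht'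
    obtain ⟨m, hm⟩ := run_nonempty henabled es1 t ht
    exact (hequiv d).trans (hA s' hs' m hm) (hB m hm t' ht')
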